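/- arXiv:0810.1644 — 3 statements merged into one kernel-verified Lean document; each statement's English description precedes it below -/
import Mathlib

section
/- Suppose Y = Z_S d*_S + ε where Z_S has full column rank. There exists a solution d̂ of the nonnegative Garrote problem with supp(d̂) = S and d̂_S > 0 if and only if ((1/n)Z_SᵀZ_S)⁻¹((1/n)Z_SᵀZ_S d*_S + (1/n)Z_Sᵀε − λ𝟏) > 0 componentwise and (1/n)Z_{S^c}ᵀ(I − Z_S(Z_SᵀZ_S)⁻¹Z_Sᵀ)ε + λ Z_{S^c}ᵀZ_S(Z_SᵀZ_S)⁻¹𝟏 ≤ λ𝟏 componentwise. -/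
open Matrix

lemma lin_quad_nonneg {a b δ : ℝ} (hδ : 0 < δ)
    (h : ∀ t : ℝ, 0 < t → t < δ → 0 ≤ a * t + b * t ^ 2) : 0 ≤ a := by
  by_contra hne
  push_neg at hne
  have hb1 : (0:ℝ) < |b| + 1 := by positivity
  set t := min (δ/2) (-a/(2*(|b|+1))) with ht
  have htpos : 0 < t := lt_min (by linarith) (div_pos (by linarith) (by positivity))
  have h1 : t ≤ δ/2 := min_le_left _ _
  have h2 : t ≤ -a/(2*(|b|+1)) := min_le_right _ _
  have h2' : t * (2*(|b|+1)) ≤ -a := by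
    rw [← le_div_iff₀ (by positivity)]; exact h2
  have hbt : b * t ≤ |b| * t := mul_le_mul_of_nonneg_right (le_abs_self b) htpos.le
  have key := h t htpos (by linarith)
  nlinarith [abs_nonneg b]

lemma garrote_kkt {n : ℕ} {ι : Type} [Fintype ι] [DecidableEq ι] (hn : 0 < n)
    (Z : Matrix (Fin n) ι ℝ) (Y : Fin n → ℝ) (lam : ℝ)
    (dhat : ι → ℝ) (hd : ∀ j, 0 ≤ dhat j) :
    (∀ d : ι → ℝ, (∀ j, 0 ≤ d j) →
        (1 / (2 * (n : ℝ))) * ∑ i, (Y i - Z.mulVec dhat i) ^ 2 + lam * ∑ j, dhat j ≤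
          (1 / (2 * (n : ℝ))) * ∑ i, (Y i - Z.mulVec d i) ^ 2 + lam * ∑ j, d j) ↔
      (∀ j, 0 ≤ lam - (1 / (n : ℝ)) * Zᵀ.mulVec (Y - Z.mulVec dhat) j ∧
        (0 < dhat j → lam - (1 / (n : ℝ)) * Zᵀ.mulVec (Y - Z.mulVec dhat) j = 0)) := by
  have hnR : (0:ℝ) < n := by exact_mod_cast hn
  set g : ι → ℝ := fun j => lam - (1 / (n : ℝ)) * Zᵀ.mulVec (Y - Z.mulVec dhat) j with hg
  have expand : ∀ d : ι → ℝ,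
      (1 / (2 * (n : ℝ))) * ∑ i, (Y i - Z.mulVec d i) ^ 2 + lam * ∑ j, d j
        = ((1 / (2 * (n : ℝ))) * ∑ i, (Y i - Z.mulVec dhat i) ^ 2 + lam * ∑ j, dhat j)
          + ∑ j, g j * (d j - dhat j)
          + (1 / (2 * (n : ℝ))) * ∑ i, (Z.mulVec (fun j => d j - dhat j) i) ^ 2 := by
    intro d
    have hmv : ∀ i, Z.mulVec d i = Z.mulVec dhat i + Z.mulVec (fun j => d j - dhat j) i := by
      intro i
      simp only [Matrix.mulVec, dotProduct, mul_sub, Finset.sum_sub_distrib]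
      ring
    have hsq : ∀ i, (Y i - Z.mulVec d i) ^ 2
        = (Y i - Z.mulVec dhat i) ^ 2
          - 2 * ((Y i - Z.mulVec dhat i) * Z.mulVec (fun j => d j - dhat j) i)
          + (Z.mulVec (fun j => d j - dhat j) i) ^ 2 := by
      intro i; rw [hmv i]; ring
    have hdot : ∑ i, (Y i - Z.mulVec dhat i) * Z.mulVec (fun j => d j - dhat j) i
        = ∑ j, Zᵀ.mulVec (Y - Z.mulVec dhat) j * (d j - dhat j) := by
      simp only [Matrix.mulVec, dotProduct, Matrix.transpose_apply, Pi.sub_apply,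
        Finset.mul_sum, Finset.sum_mul]
      rw [Finset.sum_comm]
      exact Finset.sum_congr rfl fun j _ => Finset.sum_congr rfl fun i _ => by ring
    have hgsum : ∑ j, g j * (d j - dhat j)
        = lam * ∑ j, (d j - dhat j)
          - (1 / (n:ℝ)) * ∑ j, Zᵀ.mulVec (Y - Z.mulVec dhat) j * (d j - dhat j) := by
      rw [Finset.mul_sum, Finset.mul_sum, ← Finset.sum_sub_distrib]
      exact Finset.sum_congr rfl fun j _ => by simp only [hg]; ring
    have hdsum : ∑ j, (d j - dhat j) = ∑ j, d j - ∑ j, dhat j := Finset.sum_sub_distrib _ _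
    rw [Finset.sum_congr rfl fun i (_ : i ∈ Finset.univ) => hsq i,
      Finset.sum_add_distrib, Finset.sum_sub_distrib, ← Finset.mul_sum, hdot,
      hgsum, hdsum]
    field_simp
    ring
  constructor
  · intro hmin j
    have hsingle : ∀ t : ℝ, (0 ≤ dhat j + t) →
        0 ≤ g j * t + ((1 / (2 * (n : ℝ))) * ∑ i, (Z i j) ^ 2) * t ^ 2 := by
      intro t htnn
      set d : ι → ℝ := fun j' => dhat j' + if j' = j then t else 0 with hdd
      have hdnn : ∀ j', 0 ≤ d j' := by
        intro j'; by_cases h : j' = j <;> simp [hdd, h, htnn, hd j']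
      have hkey := hmin d hdnn
      rw [expand d] at hkey
      have hsub : (fun j' => d j' - dhat j') = fun j' => if j' = j then t else 0 := by
        funext j'; simp [hdd]
      rw [hsub] at hkey
      have e1 : ∑ j', g j' * (d j' - dhat j') = g j * t := by
        rw [Finset.sum_eq_single j]
        · simp [hdd]
        · intro b _ hb; simp [hdd, hb]
        · simp
      rw [e1] at hkey
      have e2 : ∀ i, Z.mulVec (fun j' => if j' = j then t else 0) i = Z i j * t := by
        intro i
        simp only [Matrix.mulVec, dotProduct, mul_ite, mul_zero]
        rw [Finset.sum_eq_single j] <;> simp +contextual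
      have e3 : ∑ i, (Z.mulVec (fun j' => if j' = j then t else 0) i) ^ 2
          = (∑ i, (Z i j) ^ 2) * t ^ 2 := by
        simp only [e2, mul_pow, ← Finset.sum_mul]
      rw [e3] at hkey
      have h2ok : (1 / (2 * (n : ℝ))) * ((∑ i, (Z i j) ^ 2) * t ^ 2)
          = ((1 / (2 * (n : ℝ))) * ∑ i, (Z i j) ^ 2) * t ^ 2 := by ring
      linarith
    constructor
    · refine lin_quad_nonneg (b := (1 / (2 * (n : ℝ))) * ∑ i, (Z i j) ^ 2)
        (one_pos) (fun t ht _ => ?_)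
      exact hsingle t (by linarith [hd j])
    · intro hdj
      have hge : 0 ≤ g j := by
        refine lin_quad_nonneg (b := (1 / (2 * (n : ℝ))) * ∑ i, (Z i j) ^ 2)
          (one_pos) (fun t ht _ => ?_)
        exact hsingle t (by linarith [hd j])
      have hle : g j ≤ 0 := by
        have := lin_quad_nonneg (a := -g j) (b := (1 / (2 * (n : ℝ))) * ∑ i, (Z i j) ^ 2)
          (δ := dhat j) hdj (fun t ht htd => ?_)
        · linarith
        · have := hsingle (-t) (by linarith)
          nlinarith [this]
      exact le_antisymm hle hge
  · intro hcond d hdnn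
    rw [expand d]
    have h1 : 0 ≤ ∑ j, g j * (d j - dhat j) := by
      refine Finset.sum_nonneg fun j _ => ?_
      rcases (hd j).lt_or_eq with h | h
      · have hz : g j = 0 := (hcond j).2 h
        rw [hz, zero_mul]
      · have hz : dhat j = 0 := h.symm
        rw [hz, sub_zero]
        exact mul_nonneg ((hcond j).1) (hdnn j)
    have h2 : 0 ≤ (1 / (2 * (n : ℝ))) * ∑ i, (Z.mulVec (fun j => d j - dhat j) i) ^ 2 := by
      positivity
    linarith


/-- Sparsity recovery for the nonnegative Garrote (Lemma 2.1): with `Y = Z_S d*_S + ε` and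
`Z_SᵀZ_S` invertible, there exists a nonnegative Garrote solution with support exactly `S`
(positive on `S`) iff
`((1/n)Z_SᵀZ_S)⁻¹((1/n)Z_SᵀZ_S d*_S + (1/n)Z_Sᵀε - λ𝟏) > 0` componentwise and
`(1/n)Z_{Sᶜ}ᵀ(I - Z_S(Z_SᵀZ_S)⁻¹Z_Sᵀ)ε + λ Z_{Sᶜ}ᵀZ_S(Z_SᵀZ_S)⁻¹𝟏 ≤ λ𝟏` componentwise. -/
theorem garrote_sparsity_recovery {n s m : ℕ} (hn : 0 < n)
    (Z : Matrix (Fin n) (Fin s ⊕ Fin m) ℝ)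
    (ZS : Matrix (Fin n) (Fin s) ℝ) (hZS : ZS = fun i j => Z i (Sum.inl j))
    (ZSc : Matrix (Fin n) (Fin m) ℝ) (hZSc : ZSc = fun i j => Z i (Sum.inr j))
    (dS : Fin s → ℝ) (ε : Fin n → ℝ) (lam : ℝ) (hlam : 0 < lam)
    (hG : IsUnit (ZSᵀ * ZS).det)
    (Y : Fin n → ℝ) (hY : Y = ZS.mulVec dS + ε) :
    (∃ dhat : Fin s ⊕ Fin m → ℝ, (∀ j, 0 ≤ dhat j) ∧
        (∀ d : Fin s ⊕ Fin m → ℝ, (∀ j, 0 ≤ d j) →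
          (1 / (2 * (n : ℝ))) * ∑ i, (Y i - Z.mulVec dhat i) ^ 2 + lam * ∑ j, dhat j ≤
            (1 / (2 * (n : ℝ))) * ∑ i, (Y i - Z.mulVec d i) ^ 2 + lam * ∑ j, d j) ∧
        (∀ j : Fin s, 0 < dhat (Sum.inl j)) ∧ (∀ j : Fin m, dhat (Sum.inr j) = 0)) ↔
      ((∀ j : Fin s,
          0 < (((1 / (n : ℝ)) • (ZSᵀ * ZS))⁻¹.mulVec
              ((1 / (n : ℝ)) • ZSᵀ.mulVec (ZS.mulVec dS) + (1 / (n : ℝ)) • ZSᵀ.mulVec ε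
                - fun _ => lam)) j) ∧
        (∀ k : Fin m,
          ((1 / (n : ℝ)) • ZScᵀ.mulVec
                (ε - ZS.mulVec ((ZSᵀ * ZS)⁻¹.mulVec (ZSᵀ.mulVec ε)))) k
              + lam * ((ZScᵀ * ZS * (ZSᵀ * ZS)⁻¹).mulVec (fun _ => 1)) k ≤ lam)) := by
  have hnR : (0:ℝ) < n := by exact_mod_cast hn
  have hBA : (ZSᵀ*ZS)⁻¹ * (ZSᵀ*ZS) = 1 := Matrix.nonsing_inv_mul _ hG
  have hAB : (ZSᵀ*ZS) * (ZSᵀ*ZS)⁻¹ = 1 := Matrix.mul_nonsing_inv _ hG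
  have hGinv : ((1/(n:ℝ)) • (ZSᵀ*ZS))⁻¹ = (n:ℝ) • (ZSᵀ*ZS)⁻¹ := by
    apply Matrix.inv_eq_right_inv
    rw [Matrix.smul_mul, Matrix.mul_smul, smul_smul, one_div,
      inv_mul_cancel₀ (ne_of_gt hnR), one_smul, hAB]
  set v : Fin s → ℝ := (((1 / (n : ℝ)) • (ZSᵀ * ZS))⁻¹.mulVec
      ((1 / (n : ℝ)) • ZSᵀ.mulVec (ZS.mulVec dS) + (1 / (n : ℝ)) • ZSᵀ.mulVec ε
        - fun _ => lam)) with hv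
  have hvB : v = (ZSᵀ*ZS)⁻¹.mulVec (ZSᵀ.mulVec Y - fun _ => (n:ℝ)*lam) := by
    have e0 : ((n:ℝ) • ((1 / (n : ℝ)) • ZSᵀ.mulVec (ZS.mulVec dS)
          + (1 / (n : ℝ)) • ZSᵀ.mulVec ε - fun _ => lam))
        = (ZSᵀ.mulVec Y - fun _ => (n:ℝ)*lam) := by
      funext j
      simp only [hY, Matrix.mulVec_add, Pi.smul_apply, Pi.add_apply, Pi.sub_apply,
        smul_eq_mul]
      field_simp
    rw [hv, hGinv, Matrix.smul_mulVec, ← Matrix.mulVec_smul, e0]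
  clear_value v
  have hAv : (ZSᵀ*ZS).mulVec v = ZSᵀ.mulVec Y - fun _ => (n:ℝ)*lam := by
    rw [hvB, Matrix.mulVec_mulVec, hAB, Matrix.one_mulVec]
  have hres : Y - ZS.mulVec v
      = (ε - ZS.mulVec ((ZSᵀ*ZS)⁻¹.mulVec (ZSᵀ.mulVec ε)))
        + ((n:ℝ)*lam) • ZS.mulVec ((ZSᵀ*ZS)⁻¹.mulVec (fun _ => (1:ℝ))) := by
    rw [hvB]
    have e1 : ZSᵀ.mulVec Y - (fun _ => (n:ℝ)*lam)
        = ((ZSᵀ*ZS).mulVec dS + ZSᵀ.mulVec ε) - ((n:ℝ)*lam) • (fun _ => (1:ℝ)) := by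
      rw [hY, Matrix.mulVec_add, Matrix.mulVec_mulVec]
      funext j; simp
    rw [e1, Matrix.mulVec_sub, Matrix.mulVec_add, Matrix.mulVec_mulVec, hBA,
      Matrix.one_mulVec, Matrix.mulVec_smul, Matrix.mulVec_sub, Matrix.mulVec_add,
      Matrix.mulVec_smul, hY]
    funext i
    simp only [Pi.add_apply, Pi.sub_apply, Pi.smul_apply, smul_eq_mul]
    ring
  -- translation between Z and (ZS, ZSc)
  have hZmul : ∀ u : Fin s → ℝ,
      Z.mulVec (Sum.elim u fun _ => (0:ℝ)) = ZS.mulVec u := by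
    intro u; funext i
    simp [Matrix.mulVec, dotProduct, Fintype.sum_sum_type, hZS]
  have hTl : ∀ (r : Fin n → ℝ) (j : Fin s),
      Zᵀ.mulVec r (Sum.inl j) = ZSᵀ.mulVec r j := by
    intro r j
    simp [Matrix.mulVec, dotProduct, Matrix.transpose_apply, hZS]
    rfl
  have hTr : ∀ (r : Fin n → ℝ) (k : Fin m),
      Zᵀ.mulVec r (Sum.inr k) = ZScᵀ.mulVec r k := by
    intro r k
    simp [Matrix.mulVec, dotProduct, Matrix.transpose_apply, hZSc]
    rfl
  -- reformulation of the second condition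
  have hcond2 : ∀ k : Fin m,
      (1/(n:ℝ)) * ZScᵀ.mulVec (Y - ZS.mulVec v) k
        = ((1 / (n : ℝ)) • ZScᵀ.mulVec
              (ε - ZS.mulVec ((ZSᵀ * ZS)⁻¹.mulVec (ZSᵀ.mulVec ε)))) k
            + lam * ((ZScᵀ * ZS * (ZSᵀ * ZS)⁻¹).mulVec (fun _ => 1)) k := by
    intro k
    rw [hres]
    have e2 : (ZScᵀ * ZS * (ZSᵀ * ZS)⁻¹).mulVec (fun _ => (1:ℝ))
        = ZScᵀ.mulVec (ZS.mulVec ((ZSᵀ * ZS)⁻¹.mulVec (fun _ => (1:ℝ)))) := by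
      rw [Matrix.mulVec_mulVec, Matrix.mulVec_mulVec, Matrix.mul_assoc]
    rw [e2, Matrix.mulVec_add, Matrix.mulVec_smul]
    simp only [Pi.add_apply, Pi.smul_apply, smul_eq_mul]
    field_simp
  constructor
  · rintro ⟨dhat, hnn, hmin, hpos, hzero⟩
    have hkkt := (garrote_kkt hn Z Y lam dhat hnn).mp hmin
    have hdu : dhat = Sum.elim (fun j => dhat (Sum.inl j)) (fun _ => (0:ℝ)) := by
      funext c; cases c with
      | inl j => rfl
      | inr k => exact hzero k
    set u : Fin s → ℝ := fun j => dhat (Sum.inl j) with hu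
    have hZd : Z.mulVec dhat = ZS.mulVec u := by rw [hdu]; exact hZmul u
    have hgradS : ZSᵀ.mulVec Y - (ZSᵀ*ZS).mulVec u = fun _ => (n:ℝ)*lam := by
      funext j
      have h0 := (hkkt (Sum.inl j)).2 (hpos j)
      rw [hZd, hTl (Y - ZS.mulVec u) j] at h0
      have h1 := congrFun (Matrix.mulVec_sub ZSᵀ Y (ZS.mulVec u)) j
      rw [Matrix.mulVec_mulVec] at h1
      rw [show ZSᵀ.mulVec (Y - ZS.mulVec u) j
          = ZSᵀ.mulVec Y j - (ZSᵀ*ZS).mulVec u j from h1] at h0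
      simp only [Pi.sub_apply]
      field_simp at h0
      linarith
    have hAu : (ZSᵀ*ZS).mulVec u = ZSᵀ.mulVec Y - fun _ => (n:ℝ)*lam := by
      funext j
      have := congrFun hgradS j
      simp only [Pi.sub_apply] at this ⊢
      linarith
    have huv : u = v := by
      have h := hAu.trans hAv.symm
      have h2 := congrArg (ZSᵀ*ZS)⁻¹.mulVec h
      rwa [Matrix.mulVec_mulVec, Matrix.mulVec_mulVec, hBA, Matrix.one_mulVec,
        Matrix.one_mulVec] at h2
    constructor
    · intro j
      have : 0 < u j := hpos j
      rwa [huv] at this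
    · intro k
      have h2 := (hkkt (Sum.inr k)).1
      rw [hZd, hTr (Y - ZS.mulVec u) k, huv] at h2
      have := hcond2 k
      linarith
  · rintro ⟨h1, h2⟩
    refine ⟨Sum.elim v (fun _ : Fin m => (0:ℝ)), ?_, ?_, fun j => h1 j, fun k => rfl⟩
    · intro c
      cases c with
      | inl j => exact (h1 j).le
      | inr k => exact le_refl 0
    · have hnn : ∀ c : Fin s ⊕ Fin m, 0 ≤ Sum.elim v (fun _ : Fin m => (0:ℝ)) c := by
        intro c
        cases c with
        | inl j => exact (h1 j).le
        | inr k => exact le_refl 0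
      refine (garrote_kkt hn Z Y lam _ hnn).mpr ?_
      intro c
      have hZd : Z.mulVec (Sum.elim v fun _ : Fin m => (0:ℝ)) = ZS.mulVec v := hZmul v
      cases c with
      | inl j =>
        have hgl : lam - (1/(n:ℝ)) * Zᵀ.mulVec
            (Y - Z.mulVec (Sum.elim v fun _ : Fin m => (0:ℝ))) (Sum.inl j) = 0 := by
          rw [hZd, hTl (Y - ZS.mulVec v) j]
          have h1' := congrFun (Matrix.mulVec_sub ZSᵀ Y (ZS.mulVec v)) j
          rw [Matrix.mulVec_mulVec] at h1'
          rw [show ZSᵀ.mulVec (Y - ZS.mulVec v) j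
              = ZSᵀ.mulVec Y j - (ZSᵀ*ZS).mulVec v j from h1']
          have h2' := congrFun hAv j
          simp only [Pi.sub_apply] at h2'
          rw [h2']
          field_simp
          ring
        exact ⟨le_of_eq hgl.symm, fun _ => hgl⟩
      | inr k =>
        constructor
        · rw [hZd, hTr (Y - ZS.mulVec v) k]
          have := hcond2 k
          have h2k := h2 k
          linarith
        · intro habs
          simp at habs
end

section
/- Suppose Y = Z_S d*_S + ε with d*_S having no zero entries and Z_SᵀZ_S invertible. There exists a Lasso solution d̂ of min_d (1/(2n))‖Y − Zd‖² + λ‖d‖₁ with sign(d̂) = sign(d*) if and only if every entry of d*_S + ((1/n)Z_SᵀZ_S)⁻¹((1/n)Z_Sᵀε − λ·sign(d*_S)) has the same sign as the corresponding entry of d*_S, and ‖Z_{S^c}ᵀZ_S(Z_SᵀZ_S)⁻¹((1/n)Z_Sᵀε − λ·sign(d*_S)) − (1/n)Z_{S^c}ᵀε‖_∞ ≤ λ. -/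
open Matrix

lemma sgn_mul_self (x : ℝ) : Real.sign x * x = |x| := by
  rcases lt_trichotomy x 0 with h|h|h
  · rw [Real.sign_of_neg h, abs_of_neg h]; ring
  · simp [h]
  · rw [Real.sign_of_pos h, abs_of_pos h]; ring

lemma abs_sgn (x : ℝ) (h : x ≠ 0) : |Real.sign x| = 1 := by
  rcases h.lt_or_gt with h|h
  · rw [Real.sign_of_neg h]; norm_num
  · rw [Real.sign_of_pos h]; norm_num

lemma abs_shift (x t : ℝ) (hx : x ≠ 0) (ht : |t| ≤ |x|) :
    |x + t| - |x| = Real.sign x * t := by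
  rcases hx.lt_or_gt with h|h
  · rw [Real.sign_of_neg h, abs_of_neg h, abs_of_nonpos (by cases abs_le.mp ht with
      | intro h1 h2 => rw [abs_of_neg h] at h2; linarith)]
    ring
  · rw [Real.sign_of_pos h, abs_of_pos h, abs_of_nonneg (by cases abs_le.mp ht with
      | intro h1 h2 => rw [abs_of_pos h] at h1; linarith)]
    ring

lemma scalar_kkt (B A lam x : ℝ) (hB : 0 ≤ B) (hlam : 0 < lam)
    (h : ∀ t : ℝ, 0 ≤ t ^ 2 / 2 * B - t * A + lam * (|x + t| - |x|)) :
    (x ≠ 0 → A = lam * Real.sign x) ∧ (x = 0 → |A| ≤ lam) := by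
  constructor
  · intro hx
    by_contra hc
    obtain ⟨c, hcdef⟩ : ∃ c : ℝ, c = lam * Real.sign x - A := ⟨_, rfl⟩
    have hc0 : c ≠ 0 := by intro h0; rw [hcdef] at h0; exact hc (by linarith)
    obtain ⟨ε, hε⟩ : ∃ e : ℝ, e = min |x| (|c| / (B + 1)) := ⟨_, rfl⟩
    have hεpos : 0 < ε := by
      rw [hε]; exact lt_min (abs_pos.mpr hx) (div_pos (abs_pos.mpr hc0) (by linarith))
    obtain ⟨t, htdef⟩ : ∃ t : ℝ, t = -(Real.sign c * ε) := ⟨_, rfl⟩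
    have htabs : |t| ≤ |x| := by
      rw [htdef, abs_neg, abs_mul, abs_sgn c hc0, one_mul, abs_of_pos hεpos]
      rw [hε]; exact min_le_left _ _
    have key := h t
    rw [abs_shift x t hx htabs] at key
    have ht2 : t ^ 2 / 2 * B = ε ^ 2 / 2 * B := by
      have hsq : t ^ 2 = ε ^ 2 := by
        have := sq_abs t
        rw [htdef, abs_neg, abs_mul, abs_sgn c hc0, one_mul, abs_of_pos hεpos] at this
        rw [htdef, ← this]
      rw [hsq]
    have h1 : t * c = -(ε * |c|) := by
      have hs := sgn_mul_self c
      rw [htdef]; nlinarith [hs]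
    have e : -(t * A) + lam * (Real.sign x * t) = -(ε * |c|) := by
      rw [← h1, hcdef]; ring
    rw [ht2] at key
    have key2 : 0 ≤ ε ^ 2 / 2 * B - ε * |c| := by linarith
    have hεle : ε * (B + 1) ≤ |c| :=
      (le_div_iff₀ (by linarith : (0:ℝ) < B + 1)).mp (hε ▸ min_le_right _ _)
    nlinarith [mul_le_mul_of_nonneg_left hεle (le_of_lt hεpos), mul_pos hεpos hεpos]
  · intro hx
    subst hx
    by_contra hc
    push_neg at hc
    have hA0 : A ≠ 0 := by intro h0; rw [h0] at hc; simp at hc; linarith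
    obtain ⟨ε, hε⟩ : ∃ e : ℝ, e = (|A| - lam) / (B + 1) := ⟨_, rfl⟩
    have hεpos : 0 < ε := by rw [hε]; exact div_pos (by linarith) (by linarith)
    have key := h (Real.sign A * ε)
    simp only [zero_add, abs_zero, sub_zero] at key
    have h1 : Real.sign A * ε * A = ε * |A| := by
      have := sgn_mul_self A; nlinarith
    have h2 : (Real.sign A * ε) ^ 2 = ε ^ 2 := by
      have := sq_abs (Real.sign A * ε)
      rw [abs_mul, abs_sgn A hA0, one_mul, abs_of_pos hεpos] at this
      rw [← this]
    have h3 : |Real.sign A * ε| = ε := by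
      rw [abs_mul, abs_sgn A hA0, one_mul, abs_of_pos hεpos]
    rw [h2, h3, h1] at key
    have h4 : ε * (B + 1) = |A| - lam := by
      rw [hε]; field_simp
    nlinarith [mul_pos hεpos hεpos, mul_le_mul_of_nonneg_left (le_of_eq h4) (le_of_lt hεpos)]

lemma kkt_sufficient {n : ℕ} {ι : Type*} [Fintype ι] (hn : 0 < n)
    (Z : Matrix (Fin n) ι ℝ) (Y : Fin n → ℝ) (lam : ℝ) (hlam : 0 ≤ lam)
    (dhat z : ι → ℝ) (hz1 : ∀ j, |z j| ≤ 1)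
    (hz2 : ∀ j, z j * dhat j = |dhat j|)
    (hstat : ∀ j, Zᵀ.mulVec (fun i => Y i - Z.mulVec dhat i) j = (n : ℝ) * (lam * z j))
    (d : ι → ℝ) :
    (1 / (2 * (n : ℝ))) * ∑ i, (Y i - Z.mulVec dhat i) ^ 2 + lam * ∑ j, |dhat j| ≤
      (1 / (2 * (n : ℝ))) * ∑ i, (Y i - Z.mulVec d i) ^ 2 + lam * ∑ j, |d j| := by
  have hN : (0:ℝ) < (n:ℝ) := by exact_mod_cast hn
  set r : Fin n → ℝ := fun i => Y i - Z.mulVec dhat i with hr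
  set h : ι → ℝ := d - dhat with hh
  have hsplit : ∀ i, Y i - Z.mulVec d i = r i - Z.mulVec h i := by
    intro i
    have : Z.mulVec d = Z.mulVec dhat + Z.mulVec h := by
      rw [hh, Matrix.mulVec_sub]; abel
    rw [this]; simp [hr]; ring
  set D : ℝ := ∑ i, r i * Z.mulVec h i with hD
  set Q : ℝ := ∑ i, (Z.mulVec h i) ^ 2 with hQ
  have E1 : ∑ i, (Y i - Z.mulVec d i) ^ 2 = ∑ i, r i ^ 2 - 2 * D + Q := by
    calc ∑ i, (Y i - Z.mulVec d i) ^ 2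
        = ∑ i, (r i ^ 2 - 2 * (r i * Z.mulVec h i) + (Z.mulVec h i) ^ 2) :=
          Finset.sum_congr rfl fun i _ => by rw [hsplit i]; ring
      _ = ∑ i, r i ^ 2 - 2 * D + Q := by
          rw [Finset.sum_add_distrib, Finset.sum_sub_distrib, hD, hQ, Finset.mul_sum]
  set Sd : ℝ := ∑ j, z j * d j with hSd
  have hdot : D = ∑ j, Zᵀ.mulVec r j * h j := by
    have h1 := Matrix.dotProduct_mulVec r Z h
    rw [← Matrix.mulVec_transpose] at h1
    simpa [dotProduct, hD, mul_comm] using h1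
  have E2 : D = (n:ℝ) * (lam * (Sd - ∑ j, |dhat j|)) := by
    rw [hdot]
    have : ∀ j, Zᵀ.mulVec r j * h j = (n:ℝ) * lam * (z j * d j) - (n:ℝ) * lam * |dhat j| := by
      intro j
      rw [show Zᵀ.mulVec r j = (n:ℝ) * (lam * z j) from hstat j, hh, ← hz2 j]
      simp [Pi.sub_apply]; ring
    rw [Finset.sum_congr rfl fun j _ => this j, Finset.sum_sub_distrib, ← Finset.mul_sum,
      ← Finset.mul_sum, hSd]
    ring
  have E3 : Sd ≤ ∑ j, |d j| := by
    refine Finset.sum_le_sum fun j _ => ?_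
    calc z j * d j ≤ |z j * d j| := le_abs_self _
      _ = |z j| * |d j| := abs_mul _ _
      _ ≤ 1 * |d j| := by gcongr; exact hz1 j
      _ = |d j| := one_mul _
  have E4 : 0 ≤ Q := Finset.sum_nonneg fun i _ => sq_nonneg _
  have key : (1 / (2 * (n:ℝ))) * (∑ i, (Y i - Z.mulVec d i) ^ 2) =
      (1 / (2 * (n:ℝ))) * (∑ i, r i ^ 2) - lam * (Sd - ∑ j, |dhat j|) + (1 / (2 * (n:ℝ))) * Q := by
    rw [E1, E2]; field_simp
  rw [key]
  have h5 : lam * Sd ≤ lam * ∑ j, |d j| := mul_le_mul_of_nonneg_left E3 hlam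
  have h6 : 0 ≤ (1 / (2 * (n:ℝ))) * Q := mul_nonneg (by positivity) E4
  linarith

lemma kkt_necessary {n : ℕ} {ι : Type*} [Fintype ι] [DecidableEq ι] (hn : 0 < n)
    (Z : Matrix (Fin n) ι ℝ) (Y : Fin n → ℝ) (lam : ℝ) (hlam : 0 < lam)
    (dhat : ι → ℝ)
    (hmin : ∀ d : ι → ℝ,
      (1 / (2 * (n : ℝ))) * ∑ i, (Y i - Z.mulVec dhat i) ^ 2 + lam * ∑ j, |dhat j| ≤
        (1 / (2 * (n : ℝ))) * ∑ i, (Y i - Z.mulVec d i) ^ 2 + lam * ∑ j, |d j|)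
    (j : ι) :
    (dhat j ≠ 0 →
      (1 / (n:ℝ)) * Zᵀ.mulVec (fun i => Y i - Z.mulVec dhat i) j = lam * Real.sign (dhat j)) ∧
    (dhat j = 0 →
      |(1 / (n:ℝ)) * Zᵀ.mulVec (fun i => Y i - Z.mulVec dhat i) j| ≤ lam) := by
  have hN : (0:ℝ) < (n:ℝ) := by exact_mod_cast hn
  set r : Fin n → ℝ := fun i => Y i - Z.mulVec dhat i with hr
  set B : ℝ := (1/(n:ℝ)) * ∑ i, (Z i j) ^ 2 with hB
  set A : ℝ := (1/(n:ℝ)) * Zᵀ.mulVec r j with hA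
  have hBnn : 0 ≤ B := mul_nonneg (by positivity) (Finset.sum_nonneg fun i _ => sq_nonneg _)
  have hineq : ∀ t : ℝ, 0 ≤ t ^ 2 / 2 * B - t * A + lam * (|dhat j + t| - |dhat j|) := by
    intro t
    have hkey := hmin (dhat + (Pi.single j t : ι → ℝ))
    have hv : ∀ i, Y i - Z.mulVec (dhat + Pi.single j t) i = r i - t * Z i j := by
      intro i
      rw [Matrix.mulVec_add, Matrix.mulVec_single]
      simp [hr]; ring
    have hq : ∑ i, (Y i - Z.mulVec (dhat + Pi.single j t) i) ^ 2
        = ∑ i, r i ^ 2 - 2 * t * Zᵀ.mulVec r j + t ^ 2 * ∑ i, (Z i j) ^ 2 := by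
      have e1 : Zᵀ.mulVec r j = ∑ i, Z i j * r i := by
        simp [Matrix.mulVec, dotProduct, Matrix.transpose_apply]
      calc ∑ i, (Y i - Z.mulVec (dhat + Pi.single j t) i) ^ 2
          = ∑ i, (r i ^ 2 - 2 * t * (Z i j * r i) + t ^ 2 * (Z i j) ^ 2) :=
            Finset.sum_congr rfl fun i _ => by rw [hv i]; ring
        _ = _ := by
            rw [Finset.sum_add_distrib, Finset.sum_sub_distrib, e1, ← Finset.mul_sum,
              ← Finset.mul_sum]
    have habs : ∑ k, |((dhat + Pi.single j t : ι → ℝ) k)| = ∑ k, |dhat k| + (|dhat j + t| - |dhat j|) := by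
      have e2 : ∑ k, (|((dhat + Pi.single j t : ι → ℝ) k)| - |dhat k|) = |dhat j + t| - |dhat j| := by
        rw [Finset.sum_eq_single j]
        · simp
        · intro k _ hk; simp [Pi.single_eq_of_ne hk]
        · intro hj; exact absurd (Finset.mem_univ j) hj
      rw [Finset.sum_sub_distrib] at e2
      linarith [e2]
    rw [hq, habs] at hkey
    have expand : (1 / (2 * (n:ℝ))) * (∑ i, r i ^ 2 - 2 * t * Zᵀ.mulVec r j + t ^ 2 * ∑ i, (Z i j) ^ 2)
        = (1 / (2 * (n:ℝ))) * ∑ i, r i ^ 2 - t * A + t ^ 2 / 2 * B := by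
      rw [hA, hB]; field_simp
    rw [expand] at hkey
    have : (1 / (2 * (n:ℝ))) * ∑ i, (Y i - Z.mulVec dhat i) ^ 2
        = (1 / (2 * (n:ℝ))) * ∑ i, r i ^ 2 := rfl
    rw [this] at hkey
    linarith [hkey]
  have := scalar_kkt B A lam (dhat j) hBnn hlam hineq
  exact this
/-- Sign recovery for the (adaptive) Lasso (Lemma 2.4): with `Y = Z_S d*_S + ε`, `d*_S` having
no zero entries and `Z_SᵀZ_S` invertible, there exists a Lasso solution `d̂` of
`min_d (1/(2n))‖Y - Zd‖² + λ‖d‖₁` with `sign(d̂) = sign(d*)` iff each entry of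
`d*_S + ((1/n)Z_SᵀZ_S)⁻¹((1/n)Z_Sᵀε - λ sign(d*_S))` has the same sign as the corresponding
entry of `d*_S`, and
`‖Z_{Sᶜ}ᵀZ_S(Z_SᵀZ_S)⁻¹((1/n)Z_Sᵀε - λ sign(d*_S)) - (1/n)Z_{Sᶜ}ᵀε‖_∞ ≤ λ`. -/
theorem lasso_sign_recovery {n s m : ℕ} (hn : 0 < n)
    (Z : Matrix (Fin n) (Fin s ⊕ Fin m) ℝ)
    (ZS : Matrix (Fin n) (Fin s) ℝ) (hZS : ZS = fun i j => Z i (Sum.inl j))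
    (ZSc : Matrix (Fin n) (Fin m) ℝ) (hZSc : ZSc = fun i j => Z i (Sum.inr j))
    (dS : Fin s → ℝ) (hdS : ∀ j, dS j ≠ 0)
    (dstar : Fin s ⊕ Fin m → ℝ) (hdstar : dstar = Sum.elim dS (fun _ => 0))
    (ε : Fin n → ℝ) (lam : ℝ) (hlam : 0 < lam)
    (hG : IsUnit (ZSᵀ * ZS).det)
    (Y : Fin n → ℝ) (hY : Y = ZS.mulVec dS + ε) :
    (∃ dhat : Fin s ⊕ Fin m → ℝ,
        (∀ d : Fin s ⊕ Fin m → ℝ,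
          (1 / (2 * (n : ℝ))) * ∑ i, (Y i - Z.mulVec dhat i) ^ 2 + lam * ∑ j, |dhat j| ≤
            (1 / (2 * (n : ℝ))) * ∑ i, (Y i - Z.mulVec d i) ^ 2 + lam * ∑ j, |d j|) ∧
        (∀ j, Real.sign (dhat j) = Real.sign (dstar j))) ↔
      ((∀ j : Fin s,
          Real.sign (dS j +
              (((1 / (n : ℝ)) • (ZSᵀ * ZS))⁻¹.mulVec
                ((1 / (n : ℝ)) • ZSᵀ.mulVec ε - lam • fun i => Real.sign (dS i))) j)
            = Real.sign (dS j)) ∧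
        (∀ k : Fin m,
          |((ZScᵀ * ZS * (ZSᵀ * ZS)⁻¹).mulVec
                ((1 / (n : ℝ)) • ZSᵀ.mulVec ε - lam • fun i => Real.sign (dS i))) k
              - ((1 / (n : ℝ)) • ZScᵀ.mulVec ε) k| ≤ lam)) := by
  have hN : (0:ℝ) < (n:ℝ) := by exact_mod_cast hn
  have hNne : (n:ℝ) ≠ 0 := ne_of_gt hN
  set M : Matrix (Fin s) (Fin s) ℝ := ZSᵀ * ZS with hM
  set w : Fin s → ℝ := (1 / (n : ℝ)) • ZSᵀ.mulVec ε - lam • fun i => Real.sign (dS i) with hw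
  set G : Matrix (Fin s) (Fin s) ℝ := (1 / (n : ℝ)) • M with hGdef
  set u : Fin s → ℝ := G⁻¹.mulVec w with hu
  have hGdet : IsUnit G.det := by
    rw [hGdef, Matrix.det_smul]
    exact (isUnit_iff_ne_zero.mpr (by positivity)).mul hG
  have hGG : G * G⁻¹ = 1 := Matrix.mul_nonsing_inv G hGdet
  have hGG' : G⁻¹ * G = 1 := Matrix.nonsing_inv_mul G hGdet
  have hMM : M * M⁻¹ = 1 := Matrix.mul_nonsing_inv M hG
  have hGu : G.mulVec u = w := by
    rw [hu, Matrix.mulVec_mulVec, hGG, Matrix.one_mulVec]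
  have hGinv : G⁻¹ = (n:ℝ) • M⁻¹ := by
    refine Matrix.inv_eq_right_inv ?_
    rw [hGdef, smul_mul_assoc, mul_smul_comm, hMM, smul_smul]
    rw [show (1 / (n:ℝ)) * (n:ℝ) = 1 by field_simp, one_smul]
  set R : Fin n → ℝ := ε - ZS.mulVec u with hR
  have hTl : ∀ (x : Fin n → ℝ) (j : Fin s), Zᵀ.mulVec x (Sum.inl j) = ZSᵀ.mulVec x j := by
    intro x j
    simp [Matrix.mulVec, dotProduct, Matrix.transpose_apply, hZS]; rfl
  have hTr : ∀ (x : Fin n → ℝ) (k : Fin m), Zᵀ.mulVec x (Sum.inr k) = ZScᵀ.mulVec x k := by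
    intro x k
    simp [Matrix.mulVec, dotProduct, Matrix.transpose_apply, hZSc]; rfl
  have hmulElim : ∀ (a : Fin s → ℝ),
      Z.mulVec (Sum.elim a (fun _ => 0)) = ZS.mulVec a := by
    intro a
    funext i
    simp [Matrix.mulVec, dotProduct, Fintype.sum_sum_type, hZS]
  have hAlg : ∀ k : Fin m,
      ((ZScᵀ * ZS * M⁻¹).mulVec w) k - ((1 / (n:ℝ)) • ZScᵀ.mulVec ε) k
        = -((1 / (n:ℝ)) * (ZScᵀ.mulVec R) k) := by
    intro k
    have h1 : (ZScᵀ * ZS).mulVec u = (n:ℝ) • ((ZScᵀ * ZS * M⁻¹).mulVec w) := by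
      rw [hu, hGinv, Matrix.smul_mulVec, Matrix.mulVec_smul, Matrix.mulVec_mulVec]
    have h2 : ZScᵀ.mulVec R = ZScᵀ.mulVec ε - (ZScᵀ * ZS).mulVec u := by
      rw [hR, Matrix.mulVec_sub, Matrix.mulVec_mulVec]
    have h2k := congrFun h2 k
    have h1k := congrFun h1 k
    simp only [Pi.sub_apply, Pi.smul_apply, smul_eq_mul] at h2k h1k ⊢
    rw [h2k, h1k]
    field_simp
    ring
  have hGuk : ∀ j : Fin s, (M.mulVec u) j = (n:ℝ) * w j := by
    intro j
    have h := congrFun hGu j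
    rw [hGdef, Matrix.smul_mulVec] at h
    simp only [Pi.smul_apply, smul_eq_mul] at h
    field_simp at h
    linarith
  constructor
  · -- necessity
    rintro ⟨dhat, hminim, hsign⟩
    have hzero : ∀ k, dhat (Sum.inr k) = 0 := by
      intro k
      have hh := hsign (Sum.inr k)
      rw [hdstar] at hh
      simp only [Sum.elim_inr, Real.sign_zero] at hh
      exact Real.sign_eq_zero_iff.mp hh
    obtain ⟨v', hv'⟩ : ∃ v' : Fin s → ℝ, ∀ j, v' j = dhat (Sum.inl j) := ⟨_, fun _ => rfl⟩
    have hsignv : ∀ j, Real.sign (v' j) = Real.sign (dS j) := by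
      intro j
      have hh := hsign (Sum.inl j)
      rw [hdstar] at hh
      rw [hv' j]
      simpa using hh
    have hvne : ∀ j, v' j ≠ 0 := by
      intro j h0
      apply hdS j
      rw [← Real.sign_eq_zero_iff, ← hsignv j, h0, Real.sign_zero]
    have hdhat : dhat = Sum.elim v' (fun _ => 0) := by
      funext jj
      cases jj with
      | inl j => simp [hv' j]
      | inr k => simp [hzero k]
    have hZdhat : Z.mulVec dhat = ZS.mulVec v' := by rw [hdhat, hmulElim]
    have hkkt := fun (jj : Fin s ⊕ Fin m) => kkt_necessary hn Z Y lam hlam dhat hminim jj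
    have hstatS : ∀ j : Fin s,
        (1 / (n:ℝ)) * (ZSᵀ.mulVec (fun i => Y i - Z.mulVec dhat i)) j
          = lam * Real.sign (dS j) := by
      intro j
      have h := (hkkt (Sum.inl j)).1 (by rw [← hv' j]; exact hvne j)
      rw [hTl] at h
      rw [h, ← hv' j, hsignv j]
    have hεr : ZS.mulVec v' - ZS.mulVec dS = ε - (fun i => Y i - Z.mulVec dhat i) := by
      funext i
      simp only [Pi.sub_apply, hZdhat, hY, Pi.add_apply]
      ring
    have hGv : G.mulVec (v' - dS) = w := by
      funext j
      have eM : M.mulVec (v' - dS)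
          = ZSᵀ.mulVec (ε - fun i => Y i - Z.mulVec dhat i) := by
        rw [hM, ← Matrix.mulVec_mulVec, Matrix.mulVec_sub, hεr]
      have e1 : (G.mulVec (v' - dS)) j
          = (1/(n:ℝ)) * (ZSᵀ.mulVec (ε - fun i => Y i - Z.mulVec dhat i)) j := by
        rw [hGdef, Matrix.smul_mulVec, eM]
        simp only [Pi.smul_apply, smul_eq_mul]
      rw [e1, Matrix.mulVec_sub]
      simp only [Pi.sub_apply, hw, Pi.smul_apply, smul_eq_mul]
      have h3 := hstatS j
      ring_nf
      ring_nf at h3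
      linarith
    have hv'u : ∀ j, v' j = dS j + u j := by
      have e : G⁻¹.mulVec (G.mulVec (v' - dS)) = v' - dS := by
        rw [Matrix.mulVec_mulVec, hGG', Matrix.one_mulVec]
      have e2 : v' - dS = u := by rw [← e, hGv, hu]
      intro j
      have := congrFun e2 j
      simp only [Pi.sub_apply] at this
      linarith
    have hrR : (fun i => Y i - Z.mulVec dhat i) = R := by
      have hveq : v' = dS + u := funext fun j => by rw [hv'u j]; rfl
      funext i
      rw [hR]
      simp only [hZdhat, hY, hveq, Matrix.mulVec_add, Pi.add_apply, Pi.sub_apply]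
      ring
    constructor
    · intro j
      rw [← hv'u j]
      exact hsignv j
    · intro k
      rw [hAlg k, abs_neg]
      have h := (hkkt (Sum.inr k)).2 (hzero k)
      rw [hTr, hrR] at h
      exact h
  · -- sufficiency
    rintro ⟨h1, h2⟩
    obtain ⟨v, hv⟩ : ∃ v : Fin s → ℝ, v = dS + u := ⟨_, rfl⟩
    have hvj : ∀ j, v j = dS j + u j := fun j => by rw [hv]; rfl
    have hsignv : ∀ j, Real.sign (v j) = Real.sign (dS j) := by
      intro j; rw [hvj j]; exact h1 j
    obtain ⟨z, hz⟩ : ∃ z : Fin s ⊕ Fin m → ℝ,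
        z = Sum.elim (fun j => Real.sign (dS j))
          (fun k => lam⁻¹ * ((1/(n:ℝ)) * (ZScᵀ.mulVec R) k)) := ⟨_, rfl⟩
    have hRabs : ∀ k, |(1/(n:ℝ)) * (ZScᵀ.mulVec R) k| ≤ lam := by
      intro k
      have := h2 k
      rw [hAlg k, abs_neg] at this
      exact this
    have hrfun : (fun i => Y i - Z.mulVec (Sum.elim v (fun _ => 0)) i) = R := by
      funext i
      rw [hmulElim v, hR]
      simp only [hY, hv, Matrix.mulVec_add, Pi.add_apply, Pi.sub_apply]
      ring
    have hz1 : ∀ jj, |z jj| ≤ 1 := by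
      intro jj
      cases jj with
      | inl j => rw [hz]; simpa using le_of_eq (abs_sgn _ (hdS j))
      | inr k =>
          rw [hz]
          simp only [Sum.elim_inr]
          rw [abs_mul, abs_inv, abs_of_pos hlam]
          have h' := mul_le_mul_of_nonneg_left (hRabs k) (inv_nonneg.mpr hlam.le)
          simpa [inv_mul_cancel₀ (ne_of_gt hlam)] using h'
    have hz2 : ∀ jj, z jj * Sum.elim v (fun _ => 0) jj = |Sum.elim v (fun _ => 0) jj| := by
      intro jj
      cases jj with
      | inl j =>
          rw [hz]
          simp only [Sum.elim_inl]
          rw [← hsignv j]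
          exact sgn_mul_self (v j)
      | inr k => simp
    have hstat : ∀ jj, Zᵀ.mulVec (fun i => Y i - Z.mulVec (Sum.elim v (fun _ => 0)) i) jj
        = (n:ℝ) * (lam * z jj) := by
      intro jj
      cases jj with
      | inl j =>
          rw [hrfun, hTl, hz]
          simp only [Sum.elim_inl]
          have e1 : (ZSᵀ.mulVec R) j = (ZSᵀ.mulVec ε) j - (M.mulVec u) j := by
            rw [hR, Matrix.mulVec_sub, hM, Matrix.mulVec_mulVec]
            rfl
          rw [e1, hGuk j, hw]
          simp only [Pi.sub_apply, Pi.smul_apply, smul_eq_mul]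
          field_simp
          ring
      | inr k =>
          rw [hrfun, hTr, hz]
          simp only [Sum.elim_inr]
          field_simp
    refine ⟨Sum.elim v (fun _ => 0), fun d =>
      kkt_sufficient hn Z Y lam hlam.le (Sum.elim v (fun _ => 0)) z hz1 hz2 hstat d, ?_⟩
    intro jj
    cases jj with
    | inl j =>
        rw [hdstar]
        simpa using hsignv j
    | inr k =>
        rw [hdstar]
        simp
end

section
/- Let β̂ⱼᴴᵀ = β̂ⱼ·1{|β̂ⱼ| ≥ λₙ} be the hard-thresholded estimator. If max_j |β̂ⱼ − β*ⱼ| = O_p(δₙ), ρₙ = min_{j: β*ⱼ≠0} |β*ⱼ|, δₙ = o(λₙ), and λₙ = o(ρₙ), then P(sign(β̂ᴴᵀ) = sign(β*)) → 1 as n → ∞. -/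
open MeasureTheory Filter Asymptotics

/-- Variable selection (sign) consistency of hard-thresholding (Theorem 2.7): if the initial
estimator satisfies `max_j |β̂ⱼ - β*ⱼ| = O_p(δₙ)`, `ρₙ = min_{j : β*ⱼ ≠ 0} |β*ⱼ|`,
`δₙ = o(λₙ)` and `λₙ = o(ρₙ)`, then `P(sign(β̂ᴴᵀ) = sign(β*)) → 1`. -/
theorem hard_thresholding_selection_consistency
    {Ω : Type*} [MeasurableSpace Ω] (P : Measure Ω) [IsProbabilityMeasure P]
    (p : ℕ → ℕ) (βstar : ∀ n, Fin (p n) → ℝ) (βhat : ∀ n, Ω → Fin (p n) → ℝ)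
    (δ lam ρ : ℕ → ℝ) (hδ : ∀ n, 0 < δ n) (hlam : ∀ n, 0 < lam n)
    (hρ : ∀ n, IsLeast ((fun j => |βstar n j|) '' {j | βstar n j ≠ 0}) (ρ n))
    (hOp : ∃ C : ℝ, 0 < C ∧
      Tendsto (fun n => P {ω | ∃ j, C * δ n < |βhat n ω j - βstar n j|}) atTop (nhds 0))
    (h1 : (fun n => δ n) =o[atTop] fun n => lam n)
    (h2 : (fun n => lam n) =o[atTop] fun n => ρ n) :
    Tendsto (fun n => P {ω | ∀ j,
        Real.sign (if lam n ≤ |βhat n ω j| then βhat n ω j else 0) = Real.sign (βstar n j)})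
      atTop (nhds 1) := by
  obtain ⟨C, hC, hOp⟩ := hOp
  have hev : ∀ᶠ n in atTop,
      {ω | ∃ j, C * δ n < |βhat n ω j - βstar n j|}ᶜ ⊆
      {ω | ∀ j, Real.sign (if lam n ≤ |βhat n ω j| then βhat n ω j else 0)
        = Real.sign (βstar n j)} := by
    have e1 := h1.def (by positivity : (0:ℝ) < 1/(2*C))
    have e2 := h2.def (by norm_num : (0:ℝ) < 1/2)
    filter_upwards [e1, e2] with n h1n h2n
    intro ω hω
    simp only [Set.mem_compl_iff, Set.mem_setOf_eq, not_exists, not_lt] at hω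
    have hδn := hδ n; have hlamn := hlam n
    have hρpos : 0 < ρ n := by
      obtain ⟨⟨j, hj, hje⟩, _⟩ := hρ n
      rw [← hje]; exact abs_pos.mpr hj
    rw [Real.norm_eq_abs, Real.norm_eq_abs, abs_of_pos hδn, abs_of_pos hlamn] at h1n
    rw [Real.norm_eq_abs, Real.norm_eq_abs, abs_of_pos hlamn, abs_of_pos hρpos] at h2n
    have hCδ : C * δ n ≤ lam n / 2 := by
      have := mul_le_mul_of_nonneg_left h1n hC.le
      calc C * δ n ≤ C * (1/(2*C) * lam n) := this
        _ = lam n / 2 := by field_simp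
    intro j
    have hd := hω j
    rw [abs_le] at hd
    rcases eq_or_ne (βstar n j) 0 with h0 | h0
    · rw [h0] at hd
      rw [sub_zero] at hd
      have habs : |βhat n ω j| ≤ C * δ n := abs_le.mpr hd
      rw [if_neg (by linarith : ¬ lam n ≤ |βhat n ω j|), h0]
    · have hρle : ρ n ≤ |βstar n j| := (hρ n).2 ⟨j, h0, rfl⟩
      rcases lt_or_gt_of_ne h0 with hneg | hpos
      · have hb : |βstar n j| = -(βstar n j) := abs_of_neg hneg
        have hle : βhat n ω j ≤ -(lam n) := by
          have : βstar n j ≤ -(ρ n) := by linarith [hb ▸ hρle]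
          linarith [hd.2]
        have hlt : βhat n ω j < 0 := by linarith
        have : lam n ≤ |βhat n ω j| := by
          rw [abs_of_neg hlt]; linarith
        rw [if_pos this, Real.sign_of_neg hlt, Real.sign_of_neg hneg]
      · have hb : |βstar n j| = βstar n j := abs_of_pos hpos
        have hle : lam n ≤ βhat n ω j := by
          have : ρ n ≤ βstar n j := hb ▸ hρle
          linarith [hd.1]
        have hpos' : 0 < βhat n ω j := by linarith
        have : lam n ≤ |βhat n ω j| := by rw [abs_of_pos hpos']; exact hle
        rw [if_pos this, Real.sign_of_pos hpos', Real.sign_of_pos hpos]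
  have hlow : ∀ᶠ n in atTop,
      1 - P {ω | ∃ j, C * δ n < |βhat n ω j - βstar n j|} ≤
      P {ω | ∀ j, Real.sign (if lam n ≤ |βhat n ω j| then βhat n ω j else 0)
        = Real.sign (βstar n j)} := by
    filter_upwards [hev] with n hn
    have h1' : (1 : ENNReal) ≤ P {ω | ∃ j, C * δ n < |βhat n ω j - βstar n j|}
        + P {ω | ∃ j, C * δ n < |βhat n ω j - βstar n j|}ᶜ := by
      calc (1 : ENNReal) = P Set.univ := (measure_univ).symm
        _ ≤ P ({ω | ∃ j, C * δ n < |βhat n ω j - βstar n j|}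
            ∪ {ω | ∃ j, C * δ n < |βhat n ω j - βstar n j|}ᶜ) := by
            rw [Set.union_compl_self]
        _ ≤ _ := measure_union_le _ _
    have hmono := measure_mono (μ := P) hn
    calc 1 - P {ω | ∃ j, C * δ n < |βhat n ω j - βstar n j|}
        ≤ P {ω | ∃ j, C * δ n < |βhat n ω j - βstar n j|}ᶜ := by
          exact tsub_le_iff_left.mpr h1'
      _ ≤ _ := hmono
  have hlim : Tendsto (fun n => (1 : ENNReal)
      - P {ω | ∃ j, C * δ n < |βhat n ω j - βstar n j|}) atTop (nhds 1) := by
    have := ENNReal.Tendsto.sub (tendsto_const_nhds (x := (1 : ENNReal))) hOp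
      (Or.inl ENNReal.one_ne_top)
    simpa using this
  refine tendsto_of_tendsto_of_tendsto_of_le_of_le' hlim tendsto_const_nhds hlow ?_
  exact Eventually.of_forall fun n => prob_le_one
end
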